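/- For every k ≥ 2, min L_k = f_{k+1}, max L_k = 2·f_k − 1, min R_k = f_{k+1} + f_{k-1}, and max R_k = f_{k+2} − 1. -/
import Mathlib


/-- Fibonacci numbers: f 0 = f 1 = 1, f (n+2) = f (n+1) + f n. -/
def fib : ℕ → ℕ
  | 0 => 1
  | 1 => 1
  | n + 2 => fib (n + 1) + fib n

/-- Fibonacci words over {a, b}; `false` encodes `a`, `true` encodes `b`. -/
def F : ℕ → List Bool
  | 0 => [true]
  | 1 => [false]
  | n + 2 => F (n + 1) ++ F n

/-- Singular words: S 0 = a, S 1 = b, S 2 = S 0 · S₋₁ · S 0 = aa,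
and S n = S (n-2) · S (n-3) · S (n-2) for n ≥ 3. -/
def S : ℕ → List Bool
  | 0 => [false]
  | 1 => [true]
  | 2 => [false, false]
  | n + 3 => S (n + 1) ++ S n ++ S (n + 1)

/-- The position sets L_k: L_2 = {3}, L_3 = {5},
L_k = (L_{k-2} ∪ R_{k-2}) ⊕ f_k for k ≥ 4 (with R_{k-2} = L_{k-2} ⊕ f_{k-3}). -/
def Lset : ℕ → Finset ℕ
  | 0 => ∅
  | 1 => ∅
  | 2 => {3}
  | 3 => {5}
  | k + 4 => ((Lset (k + 2)) ∪ (Lset (k + 2)).image (· + fib (k + 1))).image (· + fib (k + 4))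

/-- The position sets R_k = L_k ⊕ f_{k-1} (so R_2 = {4}, R_3 = {7}). -/
def Rset (k : ℕ) : Finset ℕ := (Lset k).image (· + fib (k - 1))

lemma fib_pos : ∀ n, 1 ≤ fib n
  | 0 => le_refl 1
  | 1 => le_refl 1
  | n+2 => le_trans (fib_pos (n+1)) (Nat.le_add_right _ _)

lemma Lmain : ∀ k : ℕ, 2 ≤ k →
    fib (k+1) ∈ Lset k ∧ (∀ x ∈ Lset k, fib (k+1) ≤ x) ∧
    2 * fib k - 1 ∈ Lset k ∧ (∀ x ∈ Lset k, x ≤ 2 * fib k - 1) := by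
  intro k
  induction k using Nat.strong_induction_on with
  | _ k ih =>
    match k with
    | 0 => omega
    | 1 => omega
    | 2 => intro _; refine ⟨?_, ?_, ?_, ?_⟩ <;> simp [Lset] <;> decide
    | 3 => intro _; refine ⟨?_, ?_, ?_, ?_⟩ <;> simp [Lset] <;> decide
    | k+4 =>
      intro _
      obtain ⟨h1, h2, h3, h4⟩ := ih (k+2) (by omega) (by omega)
      have e5 : fib (k+4+1) = fib (k+4) + fib (k+3) := rfl
      have e3' : fib (k+2+1) = fib (k+2) + fib (k+1) := rfl
      have e4 : fib (k+4) = fib (k+3) + fib (k+2) := rfl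
      have e3 : fib (k+3) = fib (k+2) + fib (k+1) := rfl
      have p2 := fib_pos (k+2)
      refine ⟨?_, ?_, ?_, ?_⟩
      · simp only [Lset, Finset.mem_image, Finset.mem_union]
        exact ⟨fib (k+3), Or.inl h1, by omega⟩
      · intro x hx
        simp only [Lset, Finset.mem_image, Finset.mem_union] at hx
        obtain ⟨y, hy | ⟨z, hz, rfl⟩, rfl⟩ := hx
        · have := h2 y hy; omega
        · have := h2 z hz; omega
      · simp only [Lset, Finset.mem_image, Finset.mem_union]
        exact ⟨(2 * fib (k+2) - 1) + fib (k+1), Or.inr ⟨_, h3, rfl⟩, by omega⟩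
      · intro x hx
        simp only [Lset, Finset.mem_image, Finset.mem_union] at hx
        obtain ⟨y, hy | ⟨z, hz, rfl⟩, rfl⟩ := hx
        · have := h4 y hy; omega
        · have := h4 z hz; omega

/-- For every k ≥ 2: min L_k = f_{k+1}, max L_k = 2·f_k − 1,
min R_k = f_{k+1} + f_{k-1}, and max R_k = f_{k+2} − 1. -/
theorem lr_min_max :
    ∀ k : ℕ, 2 ≤ k →
      fib (k + 1) ∈ Lset k ∧ (∀ x ∈ Lset k, fib (k + 1) ≤ x) ∧
      2 * fib k - 1 ∈ Lset k ∧ (∀ x ∈ Lset k, x ≤ 2 * fib k - 1) ∧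
      fib (k + 1) + fib (k - 1) ∈ Rset k ∧ (∀ x ∈ Rset k, fib (k + 1) + fib (k - 1) ≤ x) ∧
      fib (k + 2) - 1 ∈ Rset k ∧ (∀ x ∈ Rset k, x ≤ fib (k + 2) - 1) := by
  intro k hk
  obtain ⟨m, rfl⟩ : ∃ m, k = m + 2 := ⟨k - 2, by omega⟩
  obtain ⟨h1, h2, h3, h4⟩ := Lmain (m+2) (by omega)
  have e1 : m + 2 - 1 = m + 1 := rfl
  have e0 : fib (m + 2 - 1) = fib (m + 1) := rfl
  have e2 : fib (m+2+2) = fib (m+2+1) + fib (m+2) := rfl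
  have e3 : fib (m+2+1) = fib (m+2) + fib (m+1) := rfl
  have p := fib_pos (m+2)
  refine ⟨h1, h2, h3, h4, ?_, ?_, ?_, ?_⟩
  · simp only [Rset, e1, Finset.mem_image]
    exact ⟨_, h1, rfl⟩
  · intro x hx
    simp only [Rset, e1, Finset.mem_image] at hx
    obtain ⟨y, hy, rfl⟩ := hx
    have := h2 y hy; omega
  · simp only [Rset, e1, Finset.mem_image]
    exact ⟨_, h3, by omega⟩
  · intro x hx
    simp only [Rset, e1, Finset.mem_image] at hx
    obtain ⟨y, hy, rfl⟩ := hx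
    have := h4 y hy; omega
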